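/- Cox–Ross–Rubinstein pricing formula for European-style derivatives: let g : ℝ → ℝ be any payoff function. Every predictable self-financing trading strategy whose terminal wealth is V ω = g (S T ω) has initial wealth equal to (1+r)^(−T) * ∑_{x = 0}^{T} (T.choose x) * q^x * (1−q)^(T−x) * g (S0 * (1+u)^x * (1+d)^(T−x)). -/

import Mathlib

open Finset

/-- Stock price at time `t` in the `T`-step CRR binomial model. -/
def crrStock (T : ℕ) (S0 u d : ℝ) (t : ℕ) (ω : Fin T → Bool) : ℝ :=
  S0 * ∏ i ∈ Finset.univ.filter (fun i : Fin T => (i : ℕ) < t),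
    (if ω i then 1 + u else 1 + d)

/-- A trading strategy `(a, b)` is predictable if the holdings chosen at time `t`
depend only on the first `t` coordinates of the trajectory. -/
def crrPredictable {T : ℕ} (a b : Fin T → (Fin T → Bool) → ℝ) : Prop :=
  ∀ (t : Fin T) (ω ω' : Fin T → Bool),
    (∀ i : Fin T, (i : ℕ) < (t : ℕ) → ω i = ω' i) →
      a t ω = a t ω' ∧ b t ω = b t ω'

/-- Self-financing condition for the strategy `(a, b)`. -/
def crrSelfFinancing {T : ℕ} (S0 u d r : ℝ) (a b : Fin T → (Fin T → Bool) → ℝ) : Prop :=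
  ∀ (t : ℕ) (ht : t + 1 < T) (ω : Fin T → Bool),
    a ⟨t, by omega⟩ ω * crrStock T S0 u d (t + 1) ω + b ⟨t, by omega⟩ ω * (1 + r) ^ (t + 1)
      = a ⟨t + 1, ht⟩ ω * crrStock T S0 u d (t + 1) ω + b ⟨t + 1, ht⟩ ω * (1 + r) ^ (t + 1)

/-- Initial wealth of the strategy `(a, b)`. -/
def crrInitialWealth {T : ℕ} (hT : 0 < T) (S0 : ℝ) (a b : Fin T → (Fin T → Bool) → ℝ)
    (ω : Fin T → Bool) : ℝ :=
  a ⟨0, hT⟩ ω * S0 + b ⟨0, hT⟩ ω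

/-- Terminal wealth of the strategy `(a, b)`. -/
def crrTerminalWealth {T : ℕ} (hT : 0 < T) (S0 u d r : ℝ)
    (a b : Fin T → (Fin T → Bool) → ℝ) (ω : Fin T → Bool) : ℝ :=
  a ⟨T - 1, by omega⟩ ω * crrStock T S0 u d T ω + b ⟨T - 1, by omega⟩ ω * (1 + r) ^ T

/-- Number of up-moves in the trajectory `ω`. -/
def crrUps {T : ℕ} (ω : Fin T → Bool) : ℕ :=
  (Finset.univ.filter (fun i : Fin T => ω i = true)).card

/-! Weight each trajectory by `q` per up-move and `1 - q` per down-move, with `q` chosen so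
that the expected gross return of the stock over one period is `1 + r`. The holdings over
period `t` do not depend on the move in that period, so under these weights the expected value
of the portfolio grows by exactly the factor `1 + r` during the period; self-financing chains
the periods together, and the expected terminal wealth is `(1 + r) ^ T` times the initial
wealth. Since `S T` depends only on the number of up-moves, the expected payoff `g (S T)` is
the binomial sum. -/

section Bernoulli

variable {ι : Type*} [Fintype ι]

noncomputable def bernoulliWeight (q : ℝ) (ω : ι → Bool) : ℝ :=
  ∏ i, if ω i then q else 1 - q

theorem prod_ite_bool_eq_pow_mul_pow {M : Type*} [CommMonoid M] (x y : M) (ω : ι → Bool) :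
    ∏ i, (if ω i then x else y) = x ^ #{i | ω i} * y ^ (Fintype.card ι - #{i | ω i}) := by
  rw [prod_ite, prod_const, prod_const, ← card_univ,
    ← card_filter_add_card_filter_not (s := univ) (fun i => ω i = true), Nat.add_sub_cancel_left]

theorem bernoulliWeight_eq (q : ℝ) (ω : ι → Bool) :
    bernoulliWeight q ω = q ^ #{i | ω i} * (1 - q) ^ (Fintype.card ι - #{i | ω i}) :=
  prod_ite_bool_eq_pow_mul_pow q (1 - q) ω

variable [DecidableEq ι]

theorem sum_bernoulliWeight (q : ℝ) : ∑ ω : ι → Bool, bernoulliWeight q ω = 1 := by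
  simp only [bernoulliWeight]
  rw [← Fintype.prod_sum (fun (_ : ι) (c : Bool) => if c then q else 1 - q)]
  simp

theorem sum_comp_card_filter {M : Type*} [AddCommMonoid M] (f : ℕ → M) :
    ∑ ω : ι → Bool, f #{i | ω i} =
      ∑ m ∈ range (Fintype.card ι + 1), (Fintype.card ι).choose m • f m := by
  rw [← card_univ, ← sum_powerset_apply_card, powerset_univ]
  exact sum_nbij' (fun ω => ({i | ω i} : Finset ι)) (fun s i => decide (i ∈ s)) (by simp)
    (by simp) (fun _ _ => by ext; simp) (fun _ _ => by ext; simp) fun _ _ => rfl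

theorem sum_bernoulliWeight_mul_comp_card (q : ℝ) (f : ℕ → ℝ) :
    ∑ ω : ι → Bool, bernoulliWeight q ω * f #{i | ω i} =
      ∑ m ∈ range (Fintype.card ι + 1),
        ((Fintype.card ι).choose m : ℝ) * q ^ m * (1 - q) ^ (Fintype.card ι - m) * f m := by
  simp only [bernoulliWeight_eq]
  rw [sum_comp_card_filter (fun m => q ^ m * (1 - q) ^ (Fintype.card ι - m) * f m)]
  simp only [nsmul_eq_mul, mul_assoc]

theorem sum_bernoulliWeight_mul_of_indep (q : ℝ) (t : ι)
    (F : (ι → Bool) → ℝ) (hF : ∀ ω ω', (∀ i, i ≠ t → ω i = ω' i) → F ω = F ω')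
    (G : Bool → ℝ) :
    ∑ ω, bernoulliWeight q ω * (F ω * G (ω t)) =
      (q * G true + (1 - q) * G false) * ∑ ω, bernoulliWeight q ω * F ω := by
  set e := Equiv.funSplitAt t Bool
  have e_symm_self (c σ) : e.symm (c, σ) t = c := by simp [e, Equiv.funSplitAt_symm_apply]
  have e_symm_ne (c σ) (j : {j // j ≠ t}) : e.symm (c, σ) j = σ j := by
    simp [e, Equiv.funSplitAt_symm_apply, j.2]
  have split (H : Bool → ℝ) : ∑ ω, bernoulliWeight q ω * (F ω * H (ω t)) =
      (q * H true + (1 - q) * H false) * ∑ σ : {j // j ≠ t} → Bool,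
        (∏ j, if σ j then q else 1 - q) * F (e.symm (false, σ)) := by
    rw [← e.symm.sum_comp, Fintype.sum_prod_type, Fintype.sum_bool, mul_sum, ← sum_add_distrib]
    refine sum_congr rfl fun σ _ => ?_
    have hF' (c) : F (e.symm (c, σ)) = F (e.symm (false, σ)) :=
      hF _ _ fun i hi => (e_symm_ne c σ ⟨i, hi⟩).trans (e_symm_ne false σ ⟨i, hi⟩).symm
    simp only [bernoulliWeight, Fintype.prod_eq_mul_prod_subtype_ne _ t, hF', e_symm_self,
      e_symm_ne]
    simp only [if_true, Bool.false_eq_true, if_false]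
    ring
  have total := split fun _ => 1
  simp only [mul_one, add_sub_cancel, one_mul] at total
  rw [split, total]

end Bernoulli

section CRR

variable {T : ℕ} {S0 u d r : ℝ}

theorem crrStock_zero (ω : Fin T → Bool) : crrStock T S0 u d 0 ω = S0 := by
  simp [crrStock]

theorem crrStock_succ {t : ℕ} (ht : t < T) (ω : Fin T → Bool) :
    crrStock T S0 u d (t + 1) ω =
      crrStock T S0 u d t ω * (if ω ⟨t, ht⟩ then 1 + u else 1 + d) := by
  have : ({i | (i : ℕ) < t + 1} : Finset (Fin T)) =
      insert ⟨t, ht⟩ ({i | (i : ℕ) < t} : Finset (Fin T)) := by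
    ext i
    simp only [mem_filter_univ, mem_insert, Fin.ext_iff]
    omega
  rw [crrStock, crrStock, this, prod_insert (by simp)]
  ring

theorem crrStock_congr {t : ℕ} {ω ω' : Fin T → Bool}
    (h : ∀ i : Fin T, (i : ℕ) < t → ω i = ω' i) :
    crrStock T S0 u d t ω = crrStock T S0 u d t ω' := by
  unfold crrStock
  congr 1
  exact prod_congr rfl fun i hi => by rw [h i ((Finset.mem_filter_univ i).mp hi)]

theorem crrStock_self (ω : Fin T → Bool) :
    crrStock T S0 u d T ω = S0 * (1 + u) ^ crrUps ω * (1 + d) ^ (T - crrUps ω) := by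
  rw [crrStock, filter_true_of_mem fun i _ => i.isLt, prod_ite_bool_eq_pow_mul_pow,
    Fintype.card_fin, crrUps, mul_assoc]

variable (S0 u d r) in
/-- The value at time `s` of the portfolio held over period `t`. -/
def crrPortfolioValue (a b : Fin T → (Fin T → Bool) → ℝ) (t : Fin T) (s : ℕ)
    (ω : Fin T → Bool) : ℝ :=
  a t ω * crrStock T S0 u d s ω + b t ω * (1 + r) ^ s

variable {q : ℝ} {a b : Fin T → (Fin T → Bool) → ℝ}

theorem sum_bernoulliWeight_mul_crrPortfolioValue_succ
    (hq : q * (1 + u) + (1 - q) * (1 + d) = 1 + r) (hpred : crrPredictable a b) {t : ℕ}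
    (ht : t < T) :
    ∑ ω, bernoulliWeight q ω * crrPortfolioValue S0 u d r a b ⟨t, ht⟩ (t + 1) ω =
      (1 + r) * ∑ ω, bernoulliWeight q ω * crrPortfolioValue S0 u d r a b ⟨t, ht⟩ t ω := by
  set F := fun ω => a ⟨t, ht⟩ ω * crrStock T S0 u d t ω
  set B := fun ω => b ⟨t, ht⟩ ω * (1 + r) ^ t
  set G : Bool → ℝ := fun c => if c then 1 + u else 1 + d
  have hF : ∀ ω ω', (∀ i, i ≠ ⟨t, ht⟩ → ω i = ω' i) → F ω = F ω' := by
    intro ω ω' h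
    have hpast (i : Fin T) (hi : (i : ℕ) < t) : ω i = ω' i := h i (Fin.ne_of_lt hi)
    simp only [F, (hpred ⟨t, ht⟩ ω ω' hpast).1, crrStock_congr hpast]
  calc ∑ ω, bernoulliWeight q ω * crrPortfolioValue S0 u d r a b ⟨t, ht⟩ (t + 1) ω
      = ∑ ω, bernoulliWeight q ω * (F ω * G (ω ⟨t, ht⟩)) +
          (1 + r) * ∑ ω, bernoulliWeight q ω * B ω := by
        simp only [crrPortfolioValue, crrStock_succ ht, mul_sum, ← sum_add_distrib]
        exact sum_congr rfl fun ω _ => by simp only [F, B, G]; ring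
    _ = (1 + r) * ∑ ω, bernoulliWeight q ω * (F ω + B ω) := by
        rw [sum_bernoulliWeight_mul_of_indep q _ F hF G]
        simp only [G, if_true, Bool.false_eq_true, if_false]
        rw [hq, ← mul_add, ← sum_add_distrib]
        simp only [mul_add]
    _ = (1 + r) * ∑ ω, bernoulliWeight q ω * crrPortfolioValue S0 u d r a b ⟨t, ht⟩ t ω := rfl

theorem sum_bernoulliWeight_mul_crrPortfolioValue_self
    (hq : q * (1 + u) + (1 - q) * (1 + d) = 1 + r) (hpred : crrPredictable a b)
    (hsf : crrSelfFinancing S0 u d r a b) (hT : 0 < T) :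
    ∀ t (ht : t < T), ∑ ω, bernoulliWeight q ω * crrPortfolioValue S0 u d r a b ⟨t, ht⟩ t ω =
      (1 + r) ^ t * ∑ ω, bernoulliWeight q ω * crrPortfolioValue S0 u d r a b ⟨0, hT⟩ 0 ω
  | 0, _ => by rw [pow_zero, one_mul]
  | t + 1, ht => by
    calc ∑ ω, bernoulliWeight q ω * crrPortfolioValue S0 u d r a b ⟨t + 1, ht⟩ (t + 1) ω
        = ∑ ω, bernoulliWeight q ω * crrPortfolioValue S0 u d r a b ⟨t, by omega⟩ (t + 1) ω :=
          sum_congr rfl fun ω _ => congrArg (bernoulliWeight q ω * ·) (hsf t ht ω).symm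
      _ = (1 + r) ^ (t + 1) *
            ∑ ω, bernoulliWeight q ω * crrPortfolioValue S0 u d r a b ⟨0, hT⟩ 0 ω := by
          rw [sum_bernoulliWeight_mul_crrPortfolioValue_succ hq hpred,
            sum_bernoulliWeight_mul_crrPortfolioValue_self hq hpred hsf hT t, pow_succ']
          ring

theorem sum_bernoulliWeight_mul_crrTerminalWealth
    (hq : q * (1 + u) + (1 - q) * (1 + d) = 1 + r) (hpred : crrPredictable a b)
    (hsf : crrSelfFinancing S0 u d r a b) (hT : 0 < T) (ω₀ : Fin T → Bool) :
    ∑ ω, bernoulliWeight q ω * crrTerminalWealth hT S0 u d r a b ω =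
      (1 + r) ^ T * crrInitialWealth hT S0 a b ω₀ := by
  have hinit (ω : Fin T → Bool) :
      crrPortfolioValue S0 u d r a b ⟨0, hT⟩ 0 ω = crrInitialWealth hT S0 a b ω₀ := by
    obtain ⟨ha, hb⟩ := hpred ⟨0, hT⟩ ω ω₀ fun i hi => absurd hi (Nat.not_lt_zero _)
    rw [crrPortfolioValue, crrInitialWealth, crrStock_zero, ha, hb, pow_zero, mul_one]
  have hlast :=
    sum_bernoulliWeight_mul_crrPortfolioValue_succ (S0 := S0) hq hpred (Nat.sub_lt hT one_pos)
  have hT1 : T - 1 + 1 = T := Nat.succ_pred_eq_of_pos hT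
  rw [hT1] at hlast
  calc ∑ ω, bernoulliWeight q ω * crrTerminalWealth hT S0 u d r a b ω
      = (1 + r) * ∑ ω, bernoulliWeight q ω *
          crrPortfolioValue S0 u d r a b ⟨T - 1, Nat.sub_lt hT one_pos⟩ (T - 1) ω := hlast
    _ = (1 + r) ^ T * crrInitialWealth hT S0 a b ω₀ := by
        rw [sum_bernoulliWeight_mul_crrPortfolioValue_self hq hpred hsf hT]
        simp only [hinit, ← sum_mul, sum_bernoulliWeight, one_mul]
        rw [← mul_assoc, ← pow_succ', hT1]

end CRR

theorem crr_european_pricing_formula_general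
    (T : ℕ) (hT : 0 < T) (S0 u d r : ℝ)
    (hd : -1 < d) (hdr : d < r) (hru : r < u)
    (g : ℝ → ℝ)
    (a b : Fin T → (Fin T → Bool) → ℝ)
    (hpred : crrPredictable a b) (hsf : crrSelfFinancing S0 u d r a b)
    (hterm : ∀ ω, crrTerminalWealth hT S0 u d r a b ω = g (crrStock T S0 u d T ω)) :
    ∀ ω, crrInitialWealth hT S0 a b ω =
      (1 + r) ^ (-(T : ℤ)) * ∑ x ∈ Finset.range (T + 1),
        (T.choose x : ℝ) * ((r - d) / (u - d)) ^ x
          * (1 - (r - d) / (u - d)) ^ (T - x)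
          * g (S0 * (1 + u) ^ x * (1 + d) ^ (T - x)) := by
  intro ω
  have hq : (r - d) / (u - d) * (1 + u) + (1 - (r - d) / (u - d)) * (1 + d) = 1 + r := by
    field_simp [sub_ne_zero.mpr (hdr.trans hru).ne']
    ring
  have key := sum_bernoulliWeight_mul_crrTerminalWealth hq hpred hsf hT ω
  simp only [hterm, crrStock_self, crrUps] at key
  rw [sum_bernoulliWeight_mul_comp_card _ fun m => g (S0 * (1 + u) ^ m * (1 + d) ^ (T - m)),
    Fintype.card_fin] at key
  rw [zpow_neg, zpow_natCast, key, inv_mul_cancel_left₀ (pow_ne_zero _ (by linarith))]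

/-- the Cox–Ross–Rubinstein pricing formula for a European-style derivative
with payoff `g (S_T)`. -/
theorem crr_european_pricing_formula
    (T : ℕ) (hT : 0 < T) (S0 u d r : ℝ) (hS0 : 0 < S0)
    (hd : -1 < d) (hdr : d < r) (hru : r < u)
    (g : ℝ → ℝ)
    (a b : Fin T → (Fin T → Bool) → ℝ)
    (hpred : crrPredictable a b) (hsf : crrSelfFinancing S0 u d r a b)
    (hterm : ∀ ω, crrTerminalWealth hT S0 u d r a b ω = g (crrStock T S0 u d T ω)) :
    ∀ ω, crrInitialWealth hT S0 a b ω =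
      (1 + r) ^ (-(T : ℤ)) * ∑ x ∈ Finset.range (T + 1),
        (T.choose x : ℝ) * ((r - d) / (u - d)) ^ x
          * (1 - (r - d) / (u - d)) ^ (T - x)
          * g (S0 * (1 + u) ^ x * (1 + d) ^ (T - x)) :=
  crr_european_pricing_formula_general T hT S0 u d r hd hdr hru g a b hpred hsf hterm
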